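/- Let B be a complex C*-algebra, σ a *-automorphism of B, and D ⊆ B a norm-closed *-subalgebra satisfying D·σ(D) = σ(D). Then D_σ is the smallest σ-invariant norm-closed *-subalgebra of B containing D; that is: D_σ is a norm-closed *-subalgebra with σ(D_σ) = D_σ and D ⊆ D_σ, and every norm-closed *-subalgebra E ⊆ B with σ(E) = E and D ⊆ E satisfies D_σ ⊆ E. -/

import Mathlib

noncomputable section

variable {B : Type*} [NonUnitalCStarAlgebra B]

noncomputable instance : Group (B ≃⋆ₐ[ℂ] B) where
  mul f g := g.trans f
  one := StarAlgEquiv.refl ℂ B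
  inv := StarAlgEquiv.symm
  mul_assoc f g h := rfl
  one_mul f := rfl
  mul_one f := rfl
  inv_mul_cancel f := by ext x; exact f.symm_apply_apply x

/-- The norm-closed linear span of `{x * y : x ∈ X, y ∈ Y}`. -/
def mulSpan (X Y : Set B) : Set B :=
  closure ↑(Submodule.span ℂ {z : B | ∃ x ∈ X, ∃ y ∈ Y, z = x * y})

/-- `D_{k,ℓ}`: sums `x_{k-1} + ⋯ + x_{ℓ-1}` with `x_j ∈ σ^j(D)`. -/
def Dfin (σ : B ≃⋆ₐ[ℂ] B) (D : Set B) (k ℓ : ℤ) : Set B :=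
  {x | ∃ f : ℤ → B, (∀ j ∈ Finset.Icc (k-1) (ℓ-1), f j ∈ ⇑(σ ^ j) '' D) ∧
      x = ∑ j ∈ Finset.Icc (k-1) (ℓ-1), f j}

/-- `D_{k,∞}`. -/
def DInfR (σ : B ≃⋆ₐ[ℂ] B) (D : Set B) (k : ℤ) : Set B :=
  closure (⋃ n : ℕ, Dfin σ D k (k + n))

/-- `D_{-∞,k}`. -/
def DInfL (σ : B ≃⋆ₐ[ℂ] B) (D : Set B) (k : ℤ) : Set B :=
  closure (⋃ n : ℕ, Dfin σ D (k - n) k)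

/-- `D_σ`. -/
def Dsig (σ : B ≃⋆ₐ[ℂ] B) (D : Set B) : Set B :=
  closure (⋃ n : ℕ, Dfin σ D (-(n:ℤ)) n)

/-- Norm-closed *-subalgebra, as a predicate on subsets. -/
def IsCStarSubset (S : Set B) : Prop :=
  IsClosed S ∧ (0:B) ∈ S ∧ (∀ x ∈ S, ∀ y ∈ S, x + y ∈ S) ∧
    (∀ (c : ℂ), ∀ x ∈ S, c • x ∈ S) ∧ (∀ x ∈ S, ∀ y ∈ S, x * y ∈ S) ∧
    (∀ x ∈ S, star x ∈ S)

/-- Harnisch–Kirchberg system. -/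
def IsHKSystem (σ : B ≃⋆ₐ[ℂ] B) (D : Set B) : Prop :=
  IsCStarSubset D ∧
  mulSpan D (⇑σ '' D) = ⇑σ '' D ∧
  D ∩ ⇑σ '' D = {0} ∧
  (∀ d ∈ D, (∀ e ∈ D, d * σ e = 0 ∧ σ e * d = 0) → d = 0)

/-- Closed two-sided ideal `I` of a C*-subalgebra `C` (both given as subsets). -/
def IsClosedIdealIn (C I : Set B) : Prop :=
  I ⊆ C ∧ IsClosed I ∧ (0:B) ∈ I ∧ (∀ x ∈ I, ∀ y ∈ I, x + y ∈ I) ∧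
    (∀ (c : ℂ), ∀ x ∈ I, c • x ∈ I) ∧ (∀ c ∈ C, ∀ j ∈ I, c * j ∈ I ∧ j * c ∈ I)

/-- Essential closed two-sided ideal. -/
def IsEssentialIdealIn (C I : Set B) : Prop :=
  IsClosedIdealIn C I ∧ ∀ x ∈ C, (∀ j ∈ I, x * j = 0 ∧ j * x = 0) → x = 0

/-! Transporting the hypothesis by `σ^j` gives `σ^(j+1)(D) = σ^j(D) · σ^(j+1)(D)`, so induction
on `j` yields `σ^i(D) · σ^j(D) ⊆ σ^j(D)` for `i ≤ j`, and taking adjoints `σ^j(D) · σ^i(D) ⊆ σ^j(D)`.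
Hence the linear span of all `σ^j(D)`, which is the union of the `D_{-n,n}`, is a σ-invariant
*-subalgebra, and so is its closure `D_σ`. Any σ-invariant `E ⊇ D` contains every `σ^j(D)`,
which gives minimality. -/

theorem mul_mem_mulSpan {X Y : Set B} {x y : B} (hx : x ∈ X) (hy : y ∈ Y) :
    x * y ∈ mulSpan X Y :=
  subset_closure (Submodule.subset_span ⟨x, hx, y, hy, rfl⟩)

theorem mulSpan_subset {X Y : Set B} {N : Submodule ℂ B} (hN : IsClosed (N : Set B))
    (h : ∀ x ∈ X, ∀ y ∈ Y, x * y ∈ N) : mulSpan X Y ⊆ N :=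
  closure_minimal (Submodule.span_le.mpr fun _ ⟨x, hx, y, hy, hz⟩ => hz ▸ h x hx y hy) hN

theorem image_mulSpan (φ : B ≃⋆ₐ[ℂ] B) (X Y : Set B) :
    ⇑φ '' mulSpan X Y = mulSpan (φ '' X) (φ '' Y) := by
  have hprod : ⇑φ '' {z | ∃ x ∈ X, ∃ y ∈ Y, z = x * y} =
      {z | ∃ x ∈ φ '' X, ∃ y ∈ φ '' Y, z = x * y} := by
    ext z
    simp only [Set.mem_image, Set.mem_ofPred_eq]
    constructor
    · rintro ⟨_, ⟨x, hx, y, hy, rfl⟩, rfl⟩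
      exact ⟨φ x, ⟨x, hx, rfl⟩, φ y, ⟨y, hy, rfl⟩, map_mul φ x y⟩
    · rintro ⟨_, ⟨x, hx, rfl⟩, _, ⟨y, hy, rfl⟩, rfl⟩
      exact ⟨x * y, ⟨x, hx, y, hy, rfl⟩, map_mul φ x y⟩
  rw [mulSpan, mulSpan, ← (StarAlgEquiv.isometry φ).isClosedEmbedding.closure_image_eq, ← hprod]
  exact congrArg closure (congrArg SetLike.coe (Submodule.span_image (φ : B →ₗ[ℂ] B))).symm

theorem isCStarSubset_closure (S : Submodule ℂ B) (hmul : ∀ x ∈ S, ∀ y ∈ S, x * y ∈ S)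
    (hstar : ∀ x ∈ S, star x ∈ S) : IsCStarSubset (closure (S : Set B)) :=
  ⟨isClosed_closure, subset_closure S.zero_mem,
    fun _ hx _ hy => map_mem_closure₂ continuous_add hx hy fun _ ha _ hb => S.add_mem ha hb,
    fun c _ hx => map_mem_closure (continuous_const_smul c) hx fun _ ha => S.smul_mem c ha,
    fun _ hx _ hy => map_mem_closure₂ continuous_mul hx hy hmul,
    fun _ hx => map_mem_closure continuous_star hx hstar⟩

theorem zpow_apply_mem_iff {σ : B ≃⋆ₐ[ℂ] B} {S : Set B} (hS : ⇑σ '' S = S) (j : ℤ) (x : B) :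
    (σ ^ j) x ∈ S ↔ x ∈ S := by
  have hσ (x : B) : σ x ∈ S ↔ x ∈ S := by
    conv_lhs => rw [← hS]
    exact σ.injective.mem_set_image
  induction j using Int.induction_on generalizing x with
  | zero => rfl
  | succ i ih => rw [zpow_add_one]; exact (ih (σ x)).trans (hσ x)
  | pred i ih =>
    rw [zpow_sub_one]
    refine (ih (σ⁻¹ x)).trans ?_
    rw [← hσ]
    exact iff_of_eq (congrArg (· ∈ S) (σ.apply_symm_apply x))

section Shift

variable (σ : B ≃⋆ₐ[ℂ] B) (D : NonUnitalStarSubalgebra ℂ B)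

def shiftAlg (j : ℤ) : NonUnitalStarSubalgebra ℂ B := D.map (σ ^ j)

def shiftSpan : Submodule ℂ B := ⨆ j, (shiftAlg σ D j).toSubmodule

variable {σ D}

theorem coe_shiftAlg (j : ℤ) : (shiftAlg σ D j : Set B) = ⇑(σ ^ j) '' D :=
  NonUnitalStarSubalgebra.coe_map _ _

theorem shiftAlg_zero : shiftAlg σ D 0 = D := by
  ext x
  simp [shiftAlg]

theorem image_shiftAlg (j : ℤ) : ⇑σ '' shiftAlg σ D j = shiftAlg σ D (j + 1) := by
  rw [coe_shiftAlg, coe_shiftAlg, Set.image_image, add_comm, zpow_one_add]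
  rfl

theorem isClosed_shiftAlg (hD : IsClosed (D : Set B)) (j : ℤ) :
    IsClosed (shiftAlg σ D j : Set B) := by
  rw [coe_shiftAlg]
  exact (StarAlgEquiv.isometry _).isClosedEmbedding.isClosedMap _ hD

theorem mulSpan_shiftAlg_succ
    (hmod : mulSpan (D : Set B) (⇑σ '' (D : Set B)) = ⇑σ '' (D : Set B)) (j : ℤ) :
    mulSpan (shiftAlg σ D j) (shiftAlg σ D (j + 1)) = (shiftAlg σ D (j + 1) : Set B) := by
  have hsucc : ⇑(σ ^ j) '' (⇑σ '' D) = (shiftAlg σ D (j + 1) : Set B) := by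
    rw [coe_shiftAlg, Set.image_image, zpow_add_one]
    rfl
  rw [← hsucc, coe_shiftAlg, ← image_mulSpan, hmod]

theorem mul_mem_shiftAlg_of_le (hD : IsClosed (D : Set B))
    (hmod : mulSpan (D : Set B) (⇑σ '' (D : Set B)) = ⇑σ '' (D : Set B))
    {i j : ℤ} (hij : i ≤ j) {x y : B} (hx : x ∈ shiftAlg σ D i) (hy : y ∈ shiftAlg σ D j) :
    x * y ∈ shiftAlg σ D j := by
  induction j, hij using Int.leInduction generalizing y with
  | base => exact mul_mem hx hy
  | succ j hij ih =>
    let N := (shiftAlg σ D (j + 1)).toSubmodule.comap (LinearMap.mulLeft ℂ x)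
    have hN : IsClosed (N : Set B) :=
      (isClosed_shiftAlg hD (j + 1)).preimage (continuous_const_mul x)
    rw [← SetLike.mem_coe, ← mulSpan_shiftAlg_succ hmod] at hy
    refine mulSpan_subset hN (fun a ha b hb => ?_) hy
    change x * (a * b) ∈ shiftAlg σ D (j + 1)
    rw [← mul_assoc, ← SetLike.mem_coe, ← mulSpan_shiftAlg_succ hmod]
    exact mul_mem_mulSpan (ih ha) hb

theorem mul_mem_shiftAlg_max (hD : IsClosed (D : Set B))
    (hmod : mulSpan (D : Set B) (⇑σ '' (D : Set B)) = ⇑σ '' (D : Set B))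
    {i j : ℤ} {x y : B} (hx : x ∈ shiftAlg σ D i) (hy : y ∈ shiftAlg σ D j) :
    x * y ∈ shiftAlg σ D (max i j) := by
  rcases le_total i j with hij | hji
  · rw [max_eq_right hij]
    exact mul_mem_shiftAlg_of_le hD hmod hij hx hy
  · rw [max_eq_left hji, ← star_star (x * y), star_mul]
    exact star_mem (mul_mem_shiftAlg_of_le hD hmod hji (star_mem hy) (star_mem hx))

theorem Dfin_eq_iSup (k ℓ : ℤ) :
    Dfin σ D k ℓ = ↑(⨆ j ∈ Finset.Icc (k - 1) (ℓ - 1), (shiftAlg σ D j).toSubmodule) := by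
  ext x
  rw [SetLike.mem_coe]
  constructor
  · rintro ⟨f, hf, rfl⟩
    refine Submodule.sum_mem _ fun j hj => Submodule.mem_iSup_of_mem j ?_
    have hfj := hf j hj
    rw [← coe_shiftAlg] at hfj
    exact Submodule.mem_iSup_of_mem hj hfj
  · rw [Submodule.mem_iSup_finset_iff_exists_sum]
    rintro ⟨μ, rfl⟩
    exact ⟨fun j => μ j, fun j _ => coe_shiftAlg (D := D) j ▸ (μ j).2, rfl⟩

theorem iUnion_Dfin : ⋃ n : ℕ, Dfin σ D (-n) n = shiftSpan σ D := by
  simp_rw [Dfin_eq_iSup]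
  rw [shiftSpan, ← Submodule.coe_iSup_of_directed]
  · congr 1
    apply le_antisymm
    · exact iSup_le fun n => iSup₂_le fun j _ => le_iSup (fun j => (shiftAlg σ D j).toSubmodule) j
    · refine iSup_le fun j => le_iSup_of_le (j.natAbs + 1) (le_iSup₂_of_le j ?_ le_rfl)
      simp only [Finset.mem_Icc]
      omega
  · refine Monotone.directed_le fun m n hmn => biSup_mono fun j => ?_
    simp only [Finset.mem_Icc]
    omega

theorem Dsig_eq_closure_shiftSpan : Dsig σ D = closure (shiftSpan σ D : Set B) := by
  rw [Dsig, iUnion_Dfin]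

theorem le_shiftSpan (j : ℤ) : (shiftAlg σ D j).toSubmodule ≤ shiftSpan σ D :=
  le_iSup (fun j => (shiftAlg σ D j).toSubmodule) j

theorem mul_mem_shiftSpan (hD : IsClosed (D : Set B))
    (hmod : mulSpan (D : Set B) (⇑σ '' (D : Set B)) = ⇑σ '' (D : Set B))
    {x y : B} (hx : x ∈ shiftSpan σ D) (hy : y ∈ shiftSpan σ D) : x * y ∈ shiftSpan σ D := by
  refine Submodule.iSup_induction _ (motive := (· * y ∈ shiftSpan σ D)) hx (fun i x hx => ?_)
    (by simp) (fun x x' hx hx' => by rw [add_mul]; exact add_mem hx hx')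
  refine Submodule.iSup_induction _ (motive := (x * · ∈ shiftSpan σ D)) hy (fun j y hy => ?_)
    (by simp) (fun y y' hy hy' => by rw [mul_add]; exact add_mem hy hy')
  exact le_shiftSpan _ (mul_mem_shiftAlg_max hD hmod hx hy)

theorem star_mem_shiftSpan {x : B} (hx : x ∈ shiftSpan σ D) : star x ∈ shiftSpan σ D := by
  refine Submodule.iSup_induction _ (motive := (star · ∈ shiftSpan σ D)) hx
    (fun i x hx => le_shiftSpan i (star_mem (s := shiftAlg σ D i) hx)) (by simp)
    (fun x x' hx hx' => by rw [star_add]; exact add_mem hx hx')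

theorem image_shiftSpan : ⇑σ '' shiftSpan σ D = shiftSpan σ D := by
  have hmap : (shiftSpan σ D).map (σ : B →ₗ[ℂ] B) = shiftSpan σ D := by
    have hshift (j : ℤ) :
        (shiftAlg σ D j).toSubmodule.map (σ : B →ₗ[ℂ] B) = (shiftAlg σ D (j + 1)).toSubmodule :=
      SetLike.coe_injective (image_shiftAlg j)
    rw [shiftSpan, Submodule.map_iSup]
    simp_rw [hshift]
    exact (Equiv.addRight (1 : ℤ)).iSup_comp (g := fun j => (shiftAlg σ D j).toSubmodule)
  exact congrArg SetLike.coe hmap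

theorem shiftSpan_subset {E : Set B} (hE : IsCStarSubset E) (hσE : ⇑σ '' E = E)
    (hDE : (D : Set B) ⊆ E) : (shiftSpan σ D : Set B) ⊆ E := by
  obtain ⟨-, hE0, hEadd, -⟩ := hE
  intro x hx
  refine Submodule.iSup_induction _ (motive := (· ∈ E)) hx (fun j x hx => ?_) hE0
    (fun x y hx hy => hEadd x hx y hy)
  obtain ⟨d, hd, rfl⟩ := NonUnitalStarSubalgebra.mem_map.mp hx
  exact (zpow_apply_mem_iff hσE j d).mpr (hDE hd)

end Shift

/-- if `D·σ(D) = σ(D)` then `D_σ` is the smallest σ-invariant norm-closed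
*-subalgebra of `B` containing `D`. -/
theorem stmt_4 (σ : B ≃⋆ₐ[ℂ] B) (D : NonUnitalStarSubalgebra ℂ B)
    (hD : IsClosed (D : Set B))
    (hmod : mulSpan (D : Set B) (⇑σ '' (D : Set B)) = ⇑σ '' (D : Set B)) :
    IsCStarSubset (Dsig σ (D : Set B)) ∧
    ⇑σ '' Dsig σ (D : Set B) = Dsig σ (D : Set B) ∧
    (D : Set B) ⊆ Dsig σ (D : Set B) ∧
    ∀ E : Set B, IsCStarSubset E → ⇑σ '' E = E → (D : Set B) ⊆ E →
      Dsig σ (D : Set B) ⊆ E := by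
  rw [Dsig_eq_closure_shiftSpan]
  refine ⟨isCStarSubset_closure _ (fun x hx y hy => mul_mem_shiftSpan hD hmod hx hy)
    (fun x hx => star_mem_shiftSpan hx), ?_, ?_, ?_⟩
  · rw [← (StarAlgEquiv.isometry σ).isClosedEmbedding.closure_image_eq, image_shiftSpan]
  · intro d hd
    refine subset_closure (le_shiftSpan 0 ?_)
    rwa [shiftAlg_zero]
  · exact fun E hE hσE hDE => closure_minimal (shiftSpan_subset hE hσE hDE) hE.1

end
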